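/- arXiv:1905.05499 — 2 statements merged into one kernel-verified Lean document; each statement's English description precedes it below -/
import Mathlib

section
/- Let m ≥ 1. There exists a constant c = c(m) ≥ 1 such that for all u, a ∈ ℝ^N, defining the boundary term b[⌊u⌋^m, ⌊a⌋^m] := (m/(m+1))·(|a|^{m+1} - |u|^{m+1}) - u · (⌊a⌋^m - ⌊u⌋^m), one has (1/c)·|⌊u⌋^{(m+1)/2} - ⌊a⌋^{(m+1)/2}|² ≤ b[⌊u⌋^m, ⌊a⌋^m] ≤ c·|⌊u⌋^{(m+1)/2} - ⌊a⌋^{(m+1)/2}|². -/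
/-!
Write `s = ‖u‖`, `t = ‖a‖` and `κ` for the cosine of the angle between `u` and `a`. Both
`(m + 1) * b[⌊u⌋^m, ⌊a⌋^m]` and `‖⌊u⌋^{(m+1)/2} - ⌊a⌋^{(m+1)/2}‖²` are affine in `κ ∈ [-1, 1]`,
with coefficients depending only on `s` and `t`, so it suffices to compare them at `κ = ±1`.
There the comparison follows from three weighted AM–GM inequalities:
`(m + 1) s t^m ≤ s^{m+1} + m t^{m+1}`, `(m + 1) s t^m ≤ 2 (s t)^{(m+1)/2} + (m - 1) t^{m+1}` and
`2 (s t)^{(m+1)/2} ≤ s^m t + s t^m`. This gives the constant `c = 2 (m + 1)`.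
-/

open Real

/-- Signed power `⌊v⌋^α := |v|^{α-1} v` on `ℝ^N`. -/
noncomputable def spow {N : ℕ} (α : ℝ) (v : EuclideanSpace ℝ (Fin N)) :
    EuclideanSpace ℝ (Fin N) := ‖v‖ ^ (α - 1) • v

/-- The boundary term `b[⌊u⌋^m, ⌊a⌋^m]`. -/
noncomputable def bTerm {N : ℕ} (m : ℝ) (u a : EuclideanSpace ℝ (Fin N)) : ℝ :=
  m / (m + 1) * (‖a‖ ^ (m + 1) - ‖u‖ ^ (m + 1)) -
    (inner ℝ u (spow m a - spow m u) : ℝ)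

lemma rpow_half_sq {x : ℝ} (hx : 0 ≤ x) (p : ℝ) : (x ^ (p / 2)) ^ 2 = x ^ p := by
  rw [← rpow_natCast, ← rpow_mul hx]
  norm_num

lemma rpow_sub_one_mul_self {x : ℝ} (hx : 0 ≤ x) {p : ℝ} (hp : p ≠ 0) :
    x ^ (p - 1) * x = x ^ p := by
  rw [← rpow_add_one' hx (by simpa using hp), sub_add_cancel]

lemma mul_mul_rpow_sub_one_le {p s t : ℝ} (hp : 1 ≤ p) (hs : 0 ≤ s) (ht : 0 ≤ t) :
    p * (s * t ^ (p - 1)) ≤ s ^ p + (p - 1) * t ^ p := by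
  have hp0 : p ≠ 0 := by positivity
  have h := geom_mean_le_arith_mean2_weighted (inv_nonneg.2 (zero_le_one.trans hp))
    (div_nonneg (sub_nonneg.2 hp) (zero_le_one.trans hp)) (rpow_nonneg hs p)
    (rpow_nonneg ht p) (by field_simp; ring)
  rw [rpow_rpow_inv hs hp0, ← rpow_mul ht, mul_div_cancel₀ _ hp0] at h
  calc p * (s * t ^ (p - 1)) ≤ p * (p⁻¹ * s ^ p + (p - 1) / p * t ^ p) :=
        mul_le_mul_of_nonneg_left h (zero_le_one.trans hp)
    _ = s ^ p + (p - 1) * t ^ p := by field_simp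

lemma sub_mul_le_sub_mul_of_mem_Icc {A B C D κ : ℝ} (hκ : κ ∈ Set.Icc (-1 : ℝ) 1)
    (h₁ : A - B ≤ C - D) (h₂ : A + B ≤ C + D) : A - κ * B ≤ C - κ * D := by
  obtain ⟨hl, hu⟩ := hκ
  nlinarith

section AMGM

variable {m s t : ℝ}

lemma two_mul_rpow_half_mul_le (hs : 0 ≤ s) (ht : 0 ≤ t) (p : ℝ) :
    2 * (s ^ (p / 2) * t ^ (p / 2)) ≤ s ^ p + t ^ p := by
  have h := two_mul_le_add_sq (s ^ (p / 2)) (t ^ (p / 2))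
  rw [rpow_half_sq hs, rpow_half_sq ht] at h
  linarith

lemma two_mul_rpow_half_mul_le_add (hm : 0 ≤ m) (hs : 0 ≤ s) (ht : 0 ≤ t) :
    2 * (s ^ ((m + 1) / 2) * t ^ ((m + 1) / 2)) ≤ s ^ m * t + s * t ^ m := by
  have hprod : (s ^ ((m + 1) / 2) * t ^ ((m + 1) / 2)) ^ 2 = (s ^ m * t) * (s * t ^ m) := by
    rw [mul_pow, rpow_half_sq hs, rpow_half_sq ht, rpow_add_one' hs (by positivity),
      rpow_add_one' ht (by positivity)]
    ring
  refine (sq_le_sq₀ (by positivity) (by positivity)).1 ?_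
  rw [mul_pow, hprod]
  nlinarith [sq_nonneg (s ^ m * t - s * t ^ m)]

lemma succ_mul_mul_rpow_le (hm : 0 ≤ m) (hs : 0 ≤ s) (ht : 0 ≤ t) :
    (m + 1) * (s * t ^ m) ≤ s ^ (m + 1) + m * t ^ (m + 1) := by
  simpa using mul_mul_rpow_sub_one_le (p := m + 1) (by linarith) hs ht

lemma succ_mul_mul_rpow_le_two_mul_rpow_half (hm : 1 ≤ m) (hs : 0 ≤ s) (ht : 0 ≤ t) :
    (m + 1) * (s * t ^ m) ≤
      2 * (s ^ ((m + 1) / 2) * t ^ ((m + 1) / 2)) + (m - 1) * t ^ (m + 1) := by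
  have h := mul_mul_rpow_sub_one_le (p := (m + 1) / 2) (by linarith) (mul_nonneg hs ht)
    (sq_nonneg t)
  rw [mul_rpow hs ht, ← rpow_natCast_mul ht, ← rpow_natCast_mul ht, Nat.cast_ofNat,
    show 2 * ((m + 1) / 2 - 1) = m - 1 by ring, show 2 * ((m + 1) / 2) = m + 1 by ring,
    mul_assoc, mul_comm t, rpow_sub_one_mul_self ht (by positivity)] at h
  linarith

end AMGM

/-- `‖x - y‖²` for `‖x‖ = s ^ (p / 2)`, `‖y‖ = t ^ (p / 2)` and angle cosine `κ`. -/
noncomputable def spowDistSq (p s t κ : ℝ) : ℝ :=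
  s ^ p + t ^ p - κ * (2 * (s ^ (p / 2) * t ^ (p / 2)))

/-- `(m + 1) * bTerm m u a` for `‖u‖ = s`, `‖a‖ = t` and angle cosine `κ`. -/
noncomputable def scaledBoundary (m s t κ : ℝ) : ℝ :=
  s ^ (m + 1) + m * t ^ (m + 1) - κ * ((m + 1) * (s * t ^ m))

section Comparison

variable {m s t κ : ℝ}

lemma spowDistSq_le_two_mul_scaledBoundary (hm : 1 ≤ m) (hs : 0 ≤ s) (ht : 0 ≤ t)
    (hκ : κ ∈ Set.Icc (-1 : ℝ) 1) :
    spowDistSq (m + 1) s t κ ≤ 2 * scaledBoundary m s t κ := by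
  have hAM := two_mul_rpow_half_mul_le hs ht (m + 1)
  have hY := succ_mul_mul_rpow_le_two_mul_rpow_half hm hs ht
  have hP : 0 ≤ s * t ^ m := by positivity
  have hT : 0 ≤ (m - 1) * t ^ (m + 1) := mul_nonneg (by linarith) (by positivity)
  have := sub_mul_le_sub_mul_of_mem_Icc hκ (A := s ^ (m + 1) + t ^ (m + 1))
    (B := 2 * (s ^ ((m + 1) / 2) * t ^ ((m + 1) / 2))) (C := 2 * (s ^ (m + 1) + m * t ^ (m + 1)))
    (D := 2 * ((m + 1) * (s * t ^ m))) (by linarith) (by nlinarith)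
  rw [spowDistSq, scaledBoundary]
  linarith

lemma scaledBoundary_le_two_mul_spowDistSq (hm : 1 ≤ m) (hs : 0 ≤ s) (ht : 0 ≤ t)
    (hκ : κ ∈ Set.Icc (-1 : ℝ) 1) :
    scaledBoundary m s t κ ≤ (m + 1) * (2 * spowDistSq (m + 1) s t κ) := by
  have hAM := two_mul_rpow_half_mul_le hs ht (m + 1)
  have hAM' := two_mul_rpow_half_mul_le_add (m := m) (by linarith) hs ht
  have hY := succ_mul_mul_rpow_le (m := m) (by linarith) hs ht
  have hY' := succ_mul_mul_rpow_le (m := m) (by linarith) ht hs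
  have hx : 0 ≤ s ^ ((m + 1) / 2) * t ^ ((m + 1) / 2) := by positivity
  have hS : 0 ≤ s ^ (m + 1) := by positivity
  have hT : 0 ≤ t ^ (m + 1) := by positivity
  have := sub_mul_le_sub_mul_of_mem_Icc hκ (A := s ^ (m + 1) + m * t ^ (m + 1))
    (B := (m + 1) * (s * t ^ m)) (C := 2 * (m + 1) * (s ^ (m + 1) + t ^ (m + 1)))
    (D := 2 * (m + 1) * (2 * (s ^ ((m + 1) / 2) * t ^ ((m + 1) / 2)))) (by nlinarith)
    (by nlinarith)
  rw [spowDistSq, scaledBoundary]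
  linarith

end Comparison

open InnerProductGeometry

section SignedPower

variable {N : ℕ}

lemma norm_spow {α : ℝ} (hα : α ≠ 0) (v : EuclideanSpace ℝ (Fin N)) :
    ‖spow α v‖ = ‖v‖ ^ α := by
  rw [spow, norm_smul, norm_of_nonneg (rpow_nonneg (norm_nonneg v) _),
    rpow_sub_one_mul_self (norm_nonneg v) hα]

lemma inner_spow_spow (α β : ℝ) (u v : EuclideanSpace ℝ (Fin N)) :
    inner ℝ (spow α u) (spow β v) = ‖u‖ ^ (α - 1) * ‖v‖ ^ (β - 1) * inner ℝ u v := by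
  simp only [spow, real_inner_smul_left, real_inner_smul_right]
  ring

lemma norm_spow_half_sub_sq {p : ℝ} (hp : p ≠ 0) (u v : EuclideanSpace ℝ (Fin N)) :
    ‖spow (p / 2) u - spow (p / 2) v‖ ^ 2 = spowDistSq p ‖u‖ ‖v‖ (cos (angle u v)) := by
  have hp2 : p / 2 ≠ 0 := by simpa using hp
  rw [spowDistSq, norm_sub_sq_real, norm_spow hp2, norm_spow hp2, rpow_half_sq (norm_nonneg u),
    rpow_half_sq (norm_nonneg v), inner_spow_spow, ← cos_angle_mul_norm_mul_norm,
    ← rpow_sub_one_mul_self (norm_nonneg u) hp2, ← rpow_sub_one_mul_self (norm_nonneg v) hp2]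
  ring

lemma succ_mul_bTerm {m : ℝ} (hm : 0 < m) (u a : EuclideanSpace ℝ (Fin N)) :
    (m + 1) * bTerm m u a = scaledBoundary m ‖u‖ ‖a‖ (cos (angle u a)) := by
  have hu : ‖u‖ ^ (m - 1) * ‖u‖ ^ 2 = ‖u‖ ^ (m + 1) := by
    rw [sq, ← mul_assoc, rpow_sub_one_mul_self (norm_nonneg u) hm.ne',
      ← rpow_add_one' (norm_nonneg u) (by positivity)]
  have ha := rpow_sub_one_mul_self (norm_nonneg a) hm.ne'
  rw [bTerm, scaledBoundary, inner_sub_right, spow, spow, real_inner_smul_right,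
    real_inner_smul_right, real_inner_self_eq_norm_sq, hu, ← cos_angle_mul_norm_mul_norm, ← ha]
  field_simp
  ring

end SignedPower

/-- For `m ≥ 1` there is `c = c(m) ≥ 1` with
`(1/c)|⌊u⌋^{(m+1)/2} - ⌊a⌋^{(m+1)/2}|² ≤ b[⌊u⌋^m,⌊a⌋^m] ≤ c|⌊u⌋^{(m+1)/2} - ⌊a⌋^{(m+1)/2}|²`. -/
theorem stmt_2 (m : ℝ) (hm : 1 ≤ m) :
    ∃ c : ℝ, 1 ≤ c ∧ ∀ (N : ℕ) (u a : EuclideanSpace ℝ (Fin N)),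
      (1 / c) * ‖spow ((m + 1) / 2) u - spow ((m + 1) / 2) a‖ ^ 2 ≤ bTerm m u a ∧
      bTerm m u a ≤ c * ‖spow ((m + 1) / 2) u - spow ((m + 1) / 2) a‖ ^ 2 := by
  refine ⟨2 * (m + 1), by linarith, fun N u a => ?_⟩
  have hm1 : 0 < m + 1 := by linarith
  have hκ : cos (angle u a) ∈ Set.Icc (-1 : ℝ) 1 := ⟨neg_one_le_cos _, cos_le_one _⟩
  have hb := succ_mul_bTerm (by linarith) u a
  have hD := norm_spow_half_sub_sq hm1.ne' u a
  have hlower := spowDistSq_le_two_mul_scaledBoundary hm (norm_nonneg u) (norm_nonneg a) hκ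
  have hupper := scaledBoundary_le_two_mul_spowDistSq hm (norm_nonneg u) (norm_nonneg a) hκ
  rw [← hb, ← hD] at hlower hupper
  constructor
  · rw [one_div_mul_eq_div, div_le_iff₀ (by positivity)]
    linarith
  · calc bTerm m u a ≤ 2 * ‖spow ((m + 1) / 2) u - spow ((m + 1) / 2) a‖ ^ 2 :=
          le_of_mul_le_mul_left hupper hm1
      _ ≤ 2 * (m + 1) * ‖spow ((m + 1) / 2) u - spow ((m + 1) / 2) a‖ ^ 2 := by
          gcongr
          linarith
end

section
/- Let m ≥ 1. There exists a constant c = c(m) such that for every bounded measurable set A ⊂ ℝ^n of positive finite measure, every u ∈ L^{m+1}(A, ℝ^N), and every a ∈ ℝ^N, the mean value (u)_A := ⨍_A u dx satisfies ⨍_A b[u(x), (u)_A] dx ≤ c · ⨍_A b[u(x), a] dx, where b[u, a] := (m/(m+1))·(|a|^{m+1} - |u|^{m+1}) - u·(⌊a⌋^m - ⌊u⌋^m) — here the arguments of b are written in the 'unpowered' variables u, a. -/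
open Real MeasureTheory

/-! The inequality holds with `c = 1`. Cauchy–Schwarz and Young's inequality
`|u| |a|^m ≤ |u|^{m+1}/(m+1) + m |a|^{m+1}/(m+1)` give `b[u, a] ≥ 0`. For fixed `a`, `b[u, a]`
is affine in the pair `(u, |u|^{m+1})`, so averaging yields
`⨍ b[u, a] = b[(u)_A, a] + ⨍ b[u, (u)_A]`. -/

section

variable {N : ℕ} {m : ℝ}

lemma norm_spow_le (a : EuclideanSpace ℝ (Fin N)) : ‖spow m a‖ ≤ ‖a‖ ^ m := by
  rcases eq_or_ne a 0 with rfl | ha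
  · simp [spow, Real.rpow_nonneg]
  · rw [spow, norm_smul, Real.norm_of_nonneg (by positivity),
      Real.rpow_sub_one (norm_ne_zero_iff.mpr ha) m, div_mul_cancel₀ _ (norm_ne_zero_iff.mpr ha)]

lemma inner_spow_self (hm : m + 1 ≠ 0) (v : EuclideanSpace ℝ (Fin N)) :
    inner ℝ v (spow m v) = ‖v‖ ^ (m + 1) := by
  rcases eq_or_ne v 0 with rfl | hv
  · simp [spow, Real.zero_rpow hm]
  · rw [spow, real_inner_smul_right, real_inner_self_eq_norm_sq, ← Real.rpow_natCast,
      ← Real.rpow_add (norm_pos_iff.mpr hv)]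
    ring_nf

lemma mul_rpow_le_add_rpow (hm : 0 < m) {x y : ℝ} (hx : 0 ≤ x) (hy : 0 ≤ y) :
    x * y ^ m ≤ 1 / (m + 1) * x ^ (m + 1) + m / (m + 1) * y ^ (m + 1) := by
  have hpq : (m + 1).HolderConjugate ((m + 1) / m) := by
    rw [Real.holderConjugate_iff]
    exact ⟨by linarith, by field_simp; ring⟩
  calc x * y ^ m ≤ x ^ (m + 1) / (m + 1) + (y ^ m) ^ ((m + 1) / m) / ((m + 1) / m) :=
        Real.young_inequality_of_nonneg hx (by positivity) hpq
    _ = _ := by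
        rw [← Real.rpow_mul hy, mul_div_cancel₀ _ hm.ne']
        field_simp

lemma bTerm_eq (hm : m + 1 ≠ 0) (u a : EuclideanSpace ℝ (Fin N)) :
    bTerm m u a = m / (m + 1) * ‖a‖ ^ (m + 1) + 1 / (m + 1) * ‖u‖ ^ (m + 1)
      - inner ℝ u (spow m a) := by
  rw [bTerm, inner_sub_right, inner_spow_self hm]
  field_simp
  ring

lemma bTerm_nonneg (hm : 0 < m) (u a : EuclideanSpace ℝ (Fin N)) : 0 ≤ bTerm m u a := by
  have h := calc inner ℝ u (spow m a) ≤ ‖u‖ * ‖spow m a‖ := real_inner_le_norm _ _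
    _ ≤ ‖u‖ * ‖a‖ ^ m := by gcongr; exact norm_spow_le a
    _ ≤ _ := mul_rpow_le_add_rpow hm (norm_nonneg u) (norm_nonneg a)
  rw [bTerm_eq (by linarith)]
  linarith

variable {α : Type*} [MeasurableSpace α] {μ : Measure α} {u : α → EuclideanSpace ℝ (Fin N)}

lemma integral_bTerm [IsProbabilityMeasure μ] (hm : m + 1 ≠ 0) (hu : Integrable u μ)
    (hup : Integrable (fun x => ‖u x‖ ^ (m + 1)) μ) (w : EuclideanSpace ℝ (Fin N)) :
    ∫ x, bTerm m (u x) w ∂μ = m / (m + 1) * ‖w‖ ^ (m + 1)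
      + 1 / (m + 1) * ∫ x, ‖u x‖ ^ (m + 1) ∂μ
      - inner ℝ (∫ x, u x ∂μ) (spow m w) := by
  have hinner : ∀ x, inner ℝ (u x) (spow m w) = inner ℝ (spow m w) (u x) :=
    fun x => real_inner_comm _ _
  have hpot : Integrable
      (fun x => m / (m + 1) * ‖w‖ ^ (m + 1) + 1 / (m + 1) * ‖u x‖ ^ (m + 1)) μ :=
    (integrable_const _).add (hup.const_mul _)
  simp_rw [bTerm_eq hm, hinner]
  rw [integral_sub hpot (hu.const_inner _), integral_add (integrable_const _) (hup.const_mul _),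
    integral_const, integral_const_mul, integral_inner hu, real_inner_comm]
  simp

lemma integral_bTerm_eq_bTerm_integral_add [IsProbabilityMeasure μ] (hm : m + 1 ≠ 0)
    (hu : Integrable u μ) (hup : Integrable (fun x => ‖u x‖ ^ (m + 1)) μ)
    (w : EuclideanSpace ℝ (Fin N)) :
    ∫ x, bTerm m (u x) w ∂μ =
      bTerm m (∫ x, u x ∂μ) w + ∫ x, bTerm m (u x) (∫ x, u x ∂μ) ∂μ := by
  rw [integral_bTerm hm hu hup, integral_bTerm hm hu hup, bTerm_eq hm, inner_spow_self hm]
  field_simp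
  ring

theorem average_bTerm_average_le [IsFiniteMeasure μ] [NeZero μ] (hm : 0 < m)
    (hu : MemLp u (ENNReal.ofReal (m + 1)) μ) (a : EuclideanSpace ℝ (Fin N)) :
    ⨍ x, bTerm m (u x) (⨍ y, u y ∂μ) ∂μ ≤ ⨍ x, bTerm m (u x) a ∂μ := by
  simp only [average_eq']
  set ν := (μ Set.univ)⁻¹ • μ
  have hν : MemLp u (ENNReal.ofReal (m + 1)) ν :=
    hu.smul_measure (ENNReal.inv_ne_top.mpr (Measure.measure_univ_ne_zero.mpr (NeZero.ne μ)))
  have hup := hν.integrable_norm_rpow (by simp; linarith) (by simp)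
  rw [ENNReal.toReal_ofReal (by linarith)] at hup
  rw [integral_bTerm_eq_bTerm_integral_add (by linarith)
    (hν.integrable (ENNReal.one_le_ofReal.mpr (by linarith))) hup a]
  linarith [bTerm_nonneg hm (∫ x, u x ∂ν) a]

end

/-- For `m ≥ 1` there is `c = c(m)` such that for every bounded measurable
`A ⊂ ℝ^n` of positive finite measure, every `u ∈ L^{m+1}(A, ℝ^N)` and every `a ∈ ℝ^N`:
`⨍_A b[u, (u)_A] ≤ c ⨍_A b[u, a]`. -/
theorem stmt_5 (m : ℝ) (hm : 1 ≤ m) :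
    ∃ c : ℝ, 0 < c ∧ ∀ (n N : ℕ) (A : Set (EuclideanSpace ℝ (Fin n)))
      (u : EuclideanSpace ℝ (Fin n) → EuclideanSpace ℝ (Fin N))
      (a : EuclideanSpace ℝ (Fin N)),
      MeasurableSet A → Bornology.IsBounded A → 0 < volume A → volume A < ⊤ →
      MemLp u (ENNReal.ofReal (m + 1)) (volume.restrict A) →
      ⨍ x in A, bTerm m (u x) (⨍ y in A, u y) ≤ c * ⨍ x in A, bTerm m (u x) a := by
  refine ⟨1, one_pos, fun n N A u a _ _ hpos hfin hu => ?_⟩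
  have : IsFiniteMeasure (volume.restrict A) := isFiniteMeasure_restrict.mpr hfin.ne
  have : NeZero (volume A) := ⟨hpos.ne'⟩
  rw [one_mul]
  exact average_bTerm_average_le (by linarith) hu a
end
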